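/- Let W̃ = W̃(m1,m2). There is a surjective group homomorphism π : W̃ → DihedralGroup m1 × DihedralGroup m2 sending r1 to (rotation generator, 1), f1 to (a reflection, 1), r2 to (1, rotation generator), f2 to (1, a reflection), and z to the identity; the kernel of π is the subgroup {1, z}, which has exactly 2 elements (in particular z ≠ 1 in W̃). Thus W̃ is a double cover of D_{2m1} × D_{2m2} with central kernel generated by z. -/

import Mathlib

namespace Stmt1

/-- Generators of the double cover `W̃(m1, m2)`. -/
inductive Gen | z | r1 | f1 | r2 | f2

open FreeGroup in
/-- Defining relations of `W̃(m1, m2)`: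
`r1^{m1} = z`, `r2^{m2} = z`, `f1^2 = 1`, `f2^2 = 1`, `(r1 f1)^2 = 1`, `(r2 f2)^2 = 1`,
`r1 r2 = r2 r1`, `r1 f2 = f2 r1`, `r2 f1 = f1 r2`, `(f1 f2)^2 = z`, `z^2 = 1`. -/
def rels (m1 m2 : ℕ) : Set (FreeGroup Gen) :=
  { of Gen.r1 ^ m1 * (of Gen.z)⁻¹,
    of Gen.r2 ^ m2 * (of Gen.z)⁻¹,
    of Gen.f1 ^ 2,
    of Gen.f2 ^ 2,
    (of Gen.r1 * of Gen.f1) ^ 2,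
    (of Gen.r2 * of Gen.f2) ^ 2,
    of Gen.r1 * of Gen.r2 * (of Gen.r2 * of Gen.r1)⁻¹,
    of Gen.r1 * of Gen.f2 * (of Gen.f2 * of Gen.r1)⁻¹,
    of Gen.r2 * of Gen.f1 * (of Gen.f1 * of Gen.r2)⁻¹,
    (of Gen.f1 * of Gen.f2) ^ 2 * (of Gen.z)⁻¹,
    of Gen.z ^ 2 }

/-- The double cover `W̃(m1, m2)` of `D_{2m1} × D_{2m2}`, as a presented group. -/
abbrev Wt (m1 m2 : ℕ) := PresentedGroup (rels m1 m2)

def wz (m1 m2 : ℕ) : Wt m1 m2 := PresentedGroup.of Gen.z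
def wr1 (m1 m2 : ℕ) : Wt m1 m2 := PresentedGroup.of Gen.r1
def wf1 (m1 m2 : ℕ) : Wt m1 m2 := PresentedGroup.of Gen.f1
def wr2 (m1 m2 : ℕ) : Wt m1 m2 := PresentedGroup.of Gen.r2
def wf2 (m1 m2 : ℕ) : Wt m1 m2 := PresentedGroup.of Gen.f2

end Stmt1

/-!
Sending `z ↦ 1` and the other generators to the standard generators of the two dihedral
factors respects all relations, which gives `π`. Once `z` is killed, `f1` and `f2` commute
(involutions whose product is an involution), so the relations of `W̃` become those of
`D_{2m1} × D_{2m2}`. As `z` is central, this yields a homomorphism `D_{2m1} × D_{2m2} → W̃/⟨z⟩`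
inverting `π`, hence `ker π = ⟨z⟩`, of order 2 because `z² = 1` and `z ≠ 1`.

That `z ≠ 1` is seen on `ℂ² ⊗ ℂ²`: with `ζᵢ^{mᵢ} = -1`, let `r1 = diag(ζ1, ζ1⁻¹) ⊗ 1`,
`f1 = σx ⊗ 1`, `r2 = 1 ⊗ diag(ζ2, ζ2⁻¹)`, `f2 = σz ⊗ σx`. Then `r1^{m1} = (-1) ⊗ 1` and
`r2^{m2} = 1 ⊗ (-1)` agree, `(f1 f2)² = (σx σz)² ⊗ 1 = -1` since `σx` and `σz` anticommute, so
`z` acts as `-1`.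
-/

theorem Commute.of_sq_eq_one {G : Type*} [Group G] {a b : G} (ha : a ^ 2 = 1) (hb : b ^ 2 = 1)
    (hab : (a * b) ^ 2 = 1) : Commute a b := by
  have hinv {x : G} (hx : x ^ 2 = 1) : x⁻¹ = x := inv_eq_of_mul_eq_one_right (by rw [← sq, hx])
  calc a * b = (a * b)⁻¹ := (hinv hab).symm
    _ = b * a := by rw [mul_inv_rev, hinv ha, hinv hb]

theorem Subgroup.mem_zpowers_iff_eq_one_or_eq {G : Type*} [Group G] {z w : G} (hz : z ^ 2 = 1) :
    w ∈ Subgroup.zpowers z ↔ w = 1 ∨ w = z := by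
  refine ⟨?_, ?_⟩
  · rintro ⟨k, rfl⟩
    change z ^ k = 1 ∨ z ^ k = z
    rw [zpow_eq_zpow_emod' k hz]
    rcases Int.emod_two_eq_zero_or_one k with hk | hk <;> simp [hk]
  · rintro (rfl | rfl)
    exacts [one_mem _, mem_zpowers _]

theorem Subgroup.zpowers_normal_of_mem_center {G : Type*} [Group G] {z : G}
    (hz : z ∈ Subgroup.center G) : (Subgroup.zpowers z).Normal :=
  ⟨fun n hn g => by
    rwa [Subgroup.mem_center_iff.1 (Subgroup.zpowers_le.2 hz hn) g, mul_inv_cancel_right]⟩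

namespace ZMod

variable {m : ℕ} [NeZero m]

theorem pow_val_add {M : Type*} [Monoid M] {x : M} (hx : x ^ m = 1) (i j : ZMod m) :
    x ^ (i + j).val = x ^ i.val * x ^ j.val := by
  rw [val_add, ← pow_eq_pow_mod _ hx, pow_add]

theorem pow_val_sub {G : Type*} [Group G] {x : G} (hx : x ^ m = 1) (i j : ZMod m) :
    x ^ (j - i).val = (x ^ i.val)⁻¹ * x ^ j.val := by
  rw [eq_inv_mul_iff_mul_eq, ← pow_val_add hx, add_sub_cancel]

end ZMod

namespace DihedralGroup

variable {G : Type*} [Group G] {m : ℕ}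

theorem eq_top_of_r_one_mem_of_sr_zero_mem {H : Subgroup (DihedralGroup m)} (hr : r 1 ∈ H)
    (hs : sr 0 ∈ H) : H = ⊤ := by
  have hr' (i : ZMod m) : r i ∈ H := by
    simpa [r_one_zpow] using H.zpow_mem hr (i.cast : ℤ)
  refine eq_top_iff.2 fun x _ => ?_
  cases x with
  | r i => exact hr' i
  | sr i => simpa using H.mul_mem hs (hr' i)

variable [NeZero m] {R F : G}

def lift (hR : R ^ m = 1) (hF : F ^ 2 = 1) (hRF : (R * F) ^ 2 = 1) : DihedralGroup m →* G where
  toFun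
    | r i => R ^ i.val
    | sr i => F * R ^ i.val
  map_one' := by rw [one_def]; simp
  map_mul' := by
    have hF' : F⁻¹ = F := inv_eq_of_mul_eq_one_left (by rw [← sq, hF])
    have hFRF : F * R * F⁻¹ = R⁻¹ :=
      eq_inv_of_mul_eq_one_right (by rw [hF']; simpa [sq, mul_assoc] using hRF)
    have hconj (k : ℕ) : F * R ^ k * F = (R ^ k)⁻¹ := by
      rw [← inv_pow, ← hFRF, conj_pow, hF']
    rintro (i | i) (j | j) <;>
      simp only [r_mul_r, r_mul_sr, sr_mul_r, sr_mul_sr, ZMod.pow_val_add hR, ZMod.pow_val_sub hR]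
    · show F * ((R ^ i.val)⁻¹ * R ^ j.val) = R ^ i.val * (F * R ^ j.val)
      simp only [← hconj, ← mul_assoc, ← sq, hF, one_mul]
    · exact (mul_assoc _ _ _).symm
    · show (R ^ i.val)⁻¹ * R ^ j.val = F * R ^ i.val * (F * R ^ j.val)
      simp only [← hconj, mul_assoc]

variable (hR : R ^ m = 1) (hF : F ^ 2 = 1) (hRF : (R * F) ^ 2 = 1)

theorem lift_r (i : ZMod m) : lift hR hF hRF (r i) = R ^ i.val := rfl

theorem lift_sr (i : ZMod m) : lift hR hF hRF (sr i) = F * R ^ i.val := rfl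

theorem lift_r_one : lift hR hF hRF (r 1) = R := by
  rw [lift_r, ZMod.val_one_eq_one_mod, ← pow_eq_pow_mod _ hR, pow_one]

theorem lift_sr_zero : lift hR hF hRF (sr 0) = F := by
  rw [lift_sr, ZMod.val_zero, pow_zero, mul_one]

theorem commute_lift {g : G} (hRg : Commute R g) (hFg : Commute F g) (x : DihedralGroup m) :
    Commute (lift hR hF hRF x) g := by
  cases x with
  | r i => exact hRg.pow_left _
  | sr i => exact hFg.mul_left (hRg.pow_left _)

end DihedralGroup

namespace Matrix

open scoped Kronecker

section KroneckerUnits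

variable {R : Type*} {m n : Type*} [Fintype m] [Fintype n] [DecidableEq m] [DecidableEq n]

def kroneckerMonoidHom [CommSemiring R] :
    Matrix m m R × Matrix n n R →* Matrix (m × n) (m × n) R where
  toFun p := p.1 ⊗ₖ p.2
  map_one' := one_kronecker_one
  map_mul' p q := mul_kronecker_mul p.1 q.1 p.2 q.2

def kroneckerUnits [CommSemiring R] :
    (Matrix m m R)ˣ × (Matrix n n R)ˣ →* (Matrix (m × n) (m × n) R)ˣ :=
  (Units.map kroneckerMonoidHom).comp MulEquiv.prodUnits.symm.toMonoidHom

@[simp]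
theorem val_kroneckerUnits [CommSemiring R] (a : (Matrix m m R)ˣ) (b : (Matrix n n R)ˣ) :
    (kroneckerUnits (a, b) : Matrix (m × n) (m × n) R) = (a : Matrix m m R) ⊗ₖ (b : Matrix n n R) :=
  rfl

theorem kroneckerUnits_neg_left [CommRing R] (a : (Matrix m m R)ˣ) (b : (Matrix n n R)ˣ) :
    kroneckerUnits (-a, b) = kroneckerUnits (a, -b) := by
  ext i j
  simp

end KroneckerUnits

variable {R : Type*} [CommRing R]

def pauliX : (Matrix (Fin 2) (Fin 2) R)ˣ :=
  ⟨!![0, 1; 1, 0], !![0, 1; 1, 0], by simp [one_fin_two], by simp [one_fin_two]⟩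

def pauliZ : (Matrix (Fin 2) (Fin 2) R)ˣ :=
  ⟨!![1, 0; 0, -1], !![1, 0; 0, -1], by simp [one_fin_two], by simp [one_fin_two]⟩

def diagInv : Rˣ →* (Matrix (Fin 2) (Fin 2) R)ˣ where
  toFun ζ := ⟨!![(ζ : R), 0; 0, ↑ζ⁻¹], !![↑ζ⁻¹, 0; 0, (ζ : R)], by simp [one_fin_two],
    by simp [one_fin_two]⟩
  map_one' := by ext : 1; simp [one_fin_two]
  map_mul' a b := by ext : 1; simp [mul_comm]

theorem pauliX_sq : (pauliX : (Matrix (Fin 2) (Fin 2) R)ˣ) ^ 2 = 1 := by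
  ext : 1; simp [sq, pauliX, one_fin_two]

theorem pauliZ_sq : (pauliZ : (Matrix (Fin 2) (Fin 2) R)ˣ) ^ 2 = 1 := by
  ext : 1; simp [sq, pauliZ, one_fin_two]

theorem pauliX_mul_pauliZ_sq : ((pauliX : (Matrix (Fin 2) (Fin 2) R)ˣ) * pauliZ) ^ 2 = -1 := by
  ext : 1; simp [sq, pauliZ, pauliX, one_fin_two]

theorem diagInv_mul_pauliX_sq (ζ : Rˣ) : (diagInv ζ * pauliX) ^ 2 = 1 := by
  ext : 1; simp [sq, diagInv, pauliX, one_fin_two]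

theorem commute_diagInv_pauliZ (ζ : Rˣ) : Commute (diagInv ζ) pauliZ := by
  ext : 1; simp [diagInv, pauliZ]

theorem diagInv_neg_one : diagInv (-1 : Rˣ) = -1 := by
  ext : 1; simp [diagInv, one_fin_two]

end Matrix

theorem Complex.exists_unit_pow_eq_neg_one (m : ℕ) [NeZero m] : ∃ ζ : ℂˣ, ζ ^ m = -1 :=
  ⟨Units.mk0 (Complex.exp (Real.pi * Complex.I / m)) (Complex.exp_ne_zero _), by
    ext
    simp [← Complex.exp_nat_mul, mul_div_cancel₀ _ (NeZero.ne (m : ℂ))]⟩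

namespace Stmt1

variable {m1 m2 : ℕ} {G H : Type*} [Group G] [Group H]

structure SatisfiesWtRels (m1 m2 : ℕ) (x : Gen → G) : Prop where
  r1_pow : x .r1 ^ m1 = x .z
  r2_pow : x .r2 ^ m2 = x .z
  f1_sq : x .f1 ^ 2 = 1
  f2_sq : x .f2 ^ 2 = 1
  r1_f1_sq : (x .r1 * x .f1) ^ 2 = 1
  r2_f2_sq : (x .r2 * x .f2) ^ 2 = 1
  r1_r2 : Commute (x .r1) (x .r2)
  r1_f2 : Commute (x .r1) (x .f2)
  r2_f1 : Commute (x .r2) (x .f1)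
  f1_f2_sq : (x .f1 * x .f2) ^ 2 = x .z
  z_sq : x .z ^ 2 = 1

theorem satisfiesWtRels_iff {x : Gen → G} :
    SatisfiesWtRels m1 m2 x ↔ ∀ r ∈ rels m1 m2, FreeGroup.lift x r = 1 := by
  simp only [rels, Set.mem_insert_iff, Set.mem_singleton_iff, forall_eq_or_imp, forall_eq,
    map_mul, map_pow, map_inv, FreeGroup.lift_apply_of, mul_inv_eq_one]
  exact ⟨fun ⟨h1, h2, h3, h4, h5, h6, h7, h8, h9, h10, h11⟩ =>
      ⟨h1, h2, h3, h4, h5, h6, h7, h8, h9, h10, h11⟩,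
    fun ⟨h1, h2, h3, h4, h5, h6, h7, h8, h9, h10, h11⟩ =>
      ⟨h1, h2, h3, h4, h5, h6, h7, h8, h9, h10, h11⟩⟩

theorem satisfiesWtRels_of : SatisfiesWtRels m1 m2 (PresentedGroup.of : Gen → Wt m1 m2) := by
  have hmk : FreeGroup.lift (PresentedGroup.of : Gen → Wt m1 m2) = PresentedGroup.mk _ :=
    FreeGroup.ext_hom _ _ fun _ => FreeGroup.lift_apply_of
  exact satisfiesWtRels_iff.2 fun r hr => hmk ▸ PresentedGroup.one_of_mem hr

theorem SatisfiesWtRels.map {x : Gen → G} (hx : SatisfiesWtRels m1 m2 x) (f : G →* H) :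
    SatisfiesWtRels m1 m2 (f ∘ x) := by
  obtain ⟨⟩ := hx
  constructor <;> simp_all [← map_pow, ← map_mul, Commute.map]

def Wt.lift {x : Gen → G} (hx : SatisfiesWtRels m1 m2 x) : Wt m1 m2 →* G :=
  PresentedGroup.toGroup (satisfiesWtRels_iff.1 hx)

@[simp]
theorem Wt.lift_of {x : Gen → G} (hx : SatisfiesWtRels m1 m2 x) (g : Gen) :
    Wt.lift hx (PresentedGroup.of g) = x g :=
  PresentedGroup.toGroup.of _

theorem wz_mem_center : wz m1 m2 ∈ Subgroup.center (Wt m1 m2) := by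
  have h := satisfiesWtRels_of (m1 := m1) (m2 := m2)
  rw [← Subgroup.centralizer_univ, ← Subgroup.coe_top, ← PresentedGroup.closure_range_of,
    Subgroup.centralizer_closure, Subgroup.mem_centralizer_iff, Set.forall_mem_range]
  intro g
  show Commute _ (PresentedGroup.of Gen.z)
  cases g with
  | z => exact Commute.refl _
  | r1 => exact h.r1_pow ▸ Commute.self_pow _ _
  | r2 => exact h.r2_pow ▸ Commute.self_pow _ _
  | f1 => exact h.r2_pow ▸ h.r2_f1.symm.pow_right _
  | f2 => exact h.r1_pow ▸ h.r1_f2.symm.pow_right _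

variable (m1 m2) in
def projGen : Gen → DihedralGroup m1 × DihedralGroup m2
  | .z => 1
  | .r1 => (.r 1, 1)
  | .f1 => (.sr 0, 1)
  | .r2 => (1, .r 1)
  | .f2 => (1, .sr 0)

theorem satisfiesWtRels_projGen : SatisfiesWtRels m1 m2 (projGen m1 m2) := by
  constructor <;> simp [projGen, Prod.ext_iff, Prod.commute_iff, sq]

variable (m1 m2) in
def proj : Wt m1 m2 →* DihedralGroup m1 × DihedralGroup m2 :=
  Wt.lift satisfiesWtRels_projGen

theorem proj_surjective : Function.Surjective (proj m1 m2) := by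
  have h1 : (proj m1 m2).range.comap (MonoidHom.inl _ _) = ⊤ :=
    DihedralGroup.eq_top_of_r_one_mem_of_sr_zero_mem ⟨wr1 m1 m2, Wt.lift_of _ _⟩
      ⟨wf1 m1 m2, Wt.lift_of _ _⟩
  have h2 : (proj m1 m2).range.comap (MonoidHom.inr _ _) = ⊤ :=
    DihedralGroup.eq_top_of_r_one_mem_of_sr_zero_mem ⟨wr2 m1 m2, Wt.lift_of _ _⟩
      ⟨wf2 m1 m2, Wt.lift_of _ _⟩
  intro p
  rw [← MonoidHom.mem_range, ← Prod.fst_mul_snd p]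
  exact mul_mem (h1.ge (Subgroup.mem_top p.1)) (h2.ge (Subgroup.mem_top p.2))

section DihedralProdLift

variable [NeZero m1] [NeZero m2] {x : Gen → G} (hx : SatisfiesWtRels m1 m2 x) (hz : x .z = 1)

def dihedralProdLift : DihedralGroup m1 × DihedralGroup m2 →* G :=
  have hF : Commute (x .f1) (x .f2) := .of_sq_eq_one hx.f1_sq hx.f2_sq (hx.f1_f2_sq.trans hz)
  MonoidHom.noncommCoprod (DihedralGroup.lift (hx.r1_pow.trans hz) hx.f1_sq hx.r1_f1_sq)
    (DihedralGroup.lift (hx.r2_pow.trans hz) hx.f2_sq hx.r2_f2_sq) fun a b =>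
      DihedralGroup.commute_lift _ _ _
        (DihedralGroup.commute_lift _ _ _ hx.r1_r2.symm hx.r1_f2.symm b).symm
        (DihedralGroup.commute_lift _ _ _ hx.r2_f1 hF.symm b).symm a

theorem dihedralProdLift_comp_proj : (dihedralProdLift hx hz).comp (proj m1 m2) = Wt.lift hx := by
  refine PresentedGroup.ext fun g => ?_
  cases g <;> simp [dihedralProdLift, proj, projGen, DihedralGroup.lift_r_one,
    DihedralGroup.lift_sr_zero, hz]

end DihedralProdLift

theorem ker_proj_le_ker [NeZero m1] [NeZero m2] {f : Wt m1 m2 →* G} (hf : f (wz m1 m2) = 1) :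
    (proj m1 m2).ker ≤ f.ker := by
  have hx := satisfiesWtRels_of.map f
  have hlift : Wt.lift hx = f := PresentedGroup.ext fun g => Wt.lift_of hx g
  intro w hw
  rw [MonoidHom.mem_ker, ← hlift, ← dihedralProdLift_comp_proj hx hf, MonoidHom.comp_apply,
    MonoidHom.mem_ker.1 hw, map_one]

theorem ker_proj [NeZero m1] [NeZero m2] : (proj m1 m2).ker = Subgroup.zpowers (wz m1 m2) := by
  have := Subgroup.zpowers_normal_of_mem_center (wz_mem_center (m1 := m1) (m2 := m2))
  refine le_antisymm ?_ (Subgroup.zpowers_le.2 (Wt.lift_of _ Gen.z))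
  simpa using ker_proj_le_ker (f := QuotientGroup.mk' (Subgroup.zpowers (wz m1 m2)))
    ((QuotientGroup.eq_one_iff _).2 (Subgroup.mem_zpowers _))

section Representation

open Matrix

variable {R : Type*} [CommRing R]

def kronGen (ζ1 ζ2 : Rˣ) : Gen → (Matrix (Fin 2 × Fin 2) (Fin 2 × Fin 2) R)ˣ
  | .z => kroneckerUnits (-1, 1)
  | .r1 => kroneckerUnits (diagInv ζ1, 1)
  | .f1 => kroneckerUnits (pauliX, 1)
  | .r2 => kroneckerUnits (1, diagInv ζ2)
  | .f2 => kroneckerUnits (pauliZ, pauliX)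

theorem satisfiesWtRels_kronGen {ζ1 ζ2 : Rˣ} (h1 : ζ1 ^ m1 = -1) (h2 : ζ2 ^ m2 = -1) :
    SatisfiesWtRels m1 m2 (kronGen ζ1 ζ2) := by
  refine ⟨?_, ?_, ?_, ?_, ?_, ?_, ((Commute.one_right _).prod (Commute.one_left _)).map _,
    ((commute_diagInv_pauliZ ζ1).prod (Commute.one_left _)).map _,
    ((Commute.one_left _).prod (Commute.one_right _)).map _, ?_, ?_⟩ <;>
  simp only [kronGen, ← map_pow, ← map_mul, Prod.pow_mk, Prod.mk_mul_mk, h1, h2, one_pow,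
    diagInv_neg_one, pauliX_sq, pauliZ_sq, diagInv_mul_pauliX_sq, pauliX_mul_pauliZ_sq,
    ← kroneckerUnits_neg_left, neg_one_sq, Prod.mk_one_one, map_one, one_mul, mul_one]

end Representation

theorem wz_ne_one [NeZero m1] [NeZero m2] : wz m1 m2 ≠ 1 := by
  obtain ⟨ζ1, h1⟩ := Complex.exists_unit_pow_eq_neg_one m1
  obtain ⟨ζ2, h2⟩ := Complex.exists_unit_pow_eq_neg_one m2
  intro h
  have hz := Wt.lift_of (satisfiesWtRels_kronGen h1 h2) Gen.z
  change Wt.lift _ (wz m1 m2) = _ at hz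
  rw [h, map_one] at hz
  have h00 := congrArg
    (fun u : (Matrix (Fin 2 × Fin 2) (Fin 2 × Fin 2) ℂ)ˣ => u.val (0, 0) (0, 0)) hz
  norm_num [kronGen] at h00

/-- `W̃(m1,m2)` is a double cover of `D_{2m1} × D_{2m2}`: there is a surjective
homomorphism `π` onto `DihedralGroup m1 × DihedralGroup m2` sending `r1` to a rotation
generator in the first factor, `f1` to a reflection in the first factor, `r2`, `f2`
likewise in the second factor, and `z` to the identity; its kernel is `{1, z}`,
which has exactly 2 elements (in particular `z ≠ 1`). -/
theorem double_cover_of_product_of_dihedral (m1 m2 : ℕ) (h1 : 1 ≤ m1) (h2 : 1 ≤ m2) :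
    ∃ π : Wt m1 m2 →* DihedralGroup m1 × DihedralGroup m2,
      Function.Surjective π ∧
      π (wr1 m1 m2) = (DihedralGroup.r 1, 1) ∧
      (∃ i : ZMod m1, π (wf1 m1 m2) = (DihedralGroup.sr i, 1)) ∧
      π (wr2 m1 m2) = (1, DihedralGroup.r 1) ∧
      (∃ j : ZMod m2, π (wf2 m1 m2) = (1, DihedralGroup.sr j)) ∧
      π (wz m1 m2) = 1 ∧
      (∀ w : Wt m1 m2, π w = 1 ↔ w = 1 ∨ w = wz m1 m2) ∧
      wz m1 m2 ≠ 1 ∧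
      Nat.card π.ker = 2 := by
  have : NeZero m1 := ⟨by omega⟩
  have : NeZero m2 := ⟨by omega⟩
  have hz2 : wz m1 m2 ^ 2 = 1 := satisfiesWtRels_of.z_sq
  have hz : orderOf (wz m1 m2) = 2 := orderOf_eq_prime hz2 wz_ne_one
  refine ⟨proj m1 m2, proj_surjective, Wt.lift_of _ _, ⟨0, Wt.lift_of _ _⟩, Wt.lift_of _ _,
    ⟨0, Wt.lift_of _ _⟩, Wt.lift_of _ _, fun w => ?_, wz_ne_one, ?_⟩
  · rw [← MonoidHom.mem_ker, ker_proj, Subgroup.mem_zpowers_iff_eq_one_or_eq hz2]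
  · rw [ker_proj, Nat.card_zpowers, hz]

end Stmt1
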